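/- The notion of Ag-bisimulation for iCGS does not enjoy the Hennessy–Milner property under the objective semantics: there exist finite single-agent iCGS G5 and G6 and states q0 ∈ G5, q0' ∈ G6 that satisfy exactly the same Ag-formulas of ATL* under the objective imperfect-information memoryless semantics, but no Ag-bisimulation relates q0 and q0'. -/

import Mathlib

/-- An imperfect-information concurrent game structure (iCGS), given as raw data;
the defining axioms are collected in `iCGS.Valid`. -/
structure iCGS (Ag AP S Act : Type) where
  init : S
  indist : Ag → S → S → Prop
  protocol : Ag → S → Set Act
  trans : S → (Ag → Act) → S → Prop
  label : S → Set AP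

namespace iCGS

variable {Ag AP S S' Act Act' : Type}

/-- The axioms of an iCGS. -/
def Valid (G : iCGS Ag AP S Act) : Prop :=
  (∀ i, Equivalence (G.indist i)) ∧
  (∀ i s, (G.protocol i s).Nonempty) ∧
  (∀ i s s', G.indist i s s' → G.protocol i s = G.protocol i s') ∧
  (∀ s a, (∃ s', G.trans s a s') ↔ ∀ i, a i ∈ G.protocol i s)

/-- Common-knowledge reachability for coalition `A`:
reflexive-transitive closure of the union of the `∼ᵢ`, `i ∈ A`. -/
def ck (G : iCGS Ag AP S Act) (A : Set Ag) : S → S → Prop :=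
  Relation.ReflTransGen (fun s s' => ∃ i ∈ A, G.indist i s s')

/-- Common-knowledge neighbourhood `C_A(q)`. -/
def CKN (G : iCGS Ag AP S Act) (A : Set Ag) (q : S) : Set S := {r | G.ck A q r}

/-- "Everybody knows" neighbourhood `E_A(q)`. -/
def EKN (G : iCGS Ag AP S Act) (A : Set Ag) (q : S) : Set S :=
  {r | ∃ i ∈ A, G.indist i q r}

/-- `σ` is a partial uniform strategy for coalition `A` with domain `Q`. -/
def IsPStrat (G : iCGS Ag AP S Act) (A : Set Ag) (Q : Set S) (σ : Ag → S → Act) : Prop :=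
  (∀ i ∈ A, ∀ s ∈ Q, σ i s ∈ G.protocol i s) ∧
  (∀ i ∈ A, ∀ s ∈ Q, ∀ t ∈ Q, G.indist i s t → σ i s = σ i t)

/-- `σ` is a (total) uniform memoryless strategy for coalition `A`. -/
def IsStrat (G : iCGS Ag AP S Act) (A : Set Ag) (σ : Ag → S → Act) : Prop :=
  G.IsPStrat A Set.univ σ

/-- Successors of `s` under joint actions compatible with `σ` on coalition `A`. -/
def succ (G : iCGS Ag AP S Act) (A : Set Ag) (σ : Ag → S → Act) (s : S) : Set S :=
  {t | ∃ a : Ag → Act, (∀ i ∈ A, a i = σ i s) ∧ G.trans s a t}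

/-- Objective outcome set of strategy `σ` at `q` (runs as infinite state sequences). -/
def OutObj (G : iCGS Ag AP S Act) (A : Set Ag) (σ : Ag → S → Act) (q : S) :
    Set (ℕ → S) :=
  {lam | lam 0 = q ∧ ∀ j, lam (j + 1) ∈ G.succ A σ (lam j)}

/-- Subjective outcome set: union of objective outcomes over states indistinguishable
from `q` for some member of the coalition. -/
def OutSubj (G : iCGS Ag AP S Act) (A : Set Ag) (σ : Ag → S → Act) (q : S) :
    Set (ℕ → S) :=
  {lam | ∃ i ∈ A, ∃ r, G.indist i q r ∧ lam ∈ G.OutObj A σ r}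

/-- Outcome set: subjective (`x = true`) or objective (`x = false`).
(For a nonempty coalition the subjective case coincides with the union of
objective outcomes over indistinguishable states, by reflexivity; for the
empty coalition it degenerates to the objective case.) -/
def Out (G : iCGS Ag AP S Act) (x : Bool) (A : Set Ag) (σ : Ag → S → Act) (q : S) :
    Set (ℕ → S) :=
  if x then G.OutObj A σ q ∪ G.OutSubj A σ q else G.OutObj A σ q

/-- `R` is a simulation for coalition `A` from `G` to `G'` (Def. of simulation):
existence of a strategy simulator over common-knowledge neighbourhoods with
(a) atom agreement, (b) epistemic back-condition, (c) strategy transfer, and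
(2) injectivity modulo common-knowledge neighbourhoods. -/
def IsSimulation (G : iCGS Ag AP S Act) (G' : iCGS Ag AP S' Act') (A : Set Ag)
    (R : S → S' → Prop) : Prop :=
  (∃ ST : Set S → Set S' → (Ag → S → Act) → (Ag → S' → Act'),
    ∀ q q', R q q' →
      (∀ σ, G.IsPStrat A (G.CKN A q) σ →
        G'.IsPStrat A (G'.CKN A q') (ST (G.CKN A q) (G'.CKN A q') σ)) ∧
      (∀ r ∈ G.CKN A q, ∀ r' ∈ G'.CKN A q', R r r' →
        ∀ σ, G.IsPStrat A (G.CKN A q) σ →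
          ∀ s' ∈ G'.succ A (ST (G.CKN A q) (G'.CKN A q') σ) r',
            ∃ s ∈ G.succ A σ r, R s s')) ∧
  (∀ q q', R q q' → G.label q = G'.label q') ∧
  (∀ q q', R q q' → ∀ i ∈ A, ∀ r', G'.indist i q' r' →
    ∃ r, G.indist i q r ∧ R r r') ∧
  (∀ q₁ q₂ q', R q₁ q' → R q₂ q' → G.CKN A q₁ = G.CKN A q₂)

/-- `R` is a bisimulation for `A` iff both `R` and its converse are `A`-simulations. -/
def IsBisimulation (G : iCGS Ag AP S Act) (G' : iCGS Ag AP S' Act') (A : Set Ag)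
    (R : S → S' → Prop) : Prop :=
  G.IsSimulation G' A R ∧ G'.IsSimulation G A (fun q' q => R q q')

end iCGS
mutual
/-- State formulas of ATL*. -/
inductive SF (AP Ag : Type) : Type where
  | atom : AP → SF AP Ag
  | neg : SF AP Ag → SF AP Ag
  | imp : SF AP Ag → SF AP Ag → SF AP Ag
  | coal : Set Ag → PF AP Ag → SF AP Ag
/-- Path formulas of ATL*. -/
inductive PF (AP Ag : Type) : Type where
  | of : SF AP Ag → PF AP Ag
  | neg : PF AP Ag → PF AP Ag
  | imp : PF AP Ag → PF AP Ag → PF AP Ag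
  | next : PF AP Ag → PF AP Ag
  | untl : PF AP Ag → PF AP Ag → PF AP Ag
end

variable {Ag AP S Act : Type}

mutual
/-- Satisfaction of ATL* state formulas; `x = true` is the subjective,
`x = false` the objective imperfect-information memoryless semantics. -/
def SSat (G : iCGS Ag AP S Act) (x : Bool) : S → SF AP Ag → Prop
  | s, .atom p => p ∈ G.label s
  | s, .neg φ => ¬ SSat G x s φ
  | s, .imp φ ψ => SSat G x s φ → SSat G x s ψ
  | s, .coal A ψ =>
      ∃ σ, G.IsStrat A σ ∧ ∀ lam ∈ G.Out x A σ s, PSat G x lam ψ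
/-- Satisfaction of ATL* path formulas on runs. -/
def PSat (G : iCGS Ag AP S Act) (x : Bool) : (ℕ → S) → PF AP Ag → Prop
  | lam, .of φ => SSat G x (lam 0) φ
  | lam, .neg ψ => ¬ PSat G x lam ψ
  | lam, .imp ψ χ => PSat G x lam ψ → PSat G x lam χ
  | lam, .next ψ => PSat G x (fun n => lam (n + 1)) ψ
  | lam, .untl ψ χ => ∃ j, PSat G x (fun n => lam (n + j)) χ ∧
      ∀ k < j, PSat G x (fun n => lam (n + k)) ψ
end

mutual
/-- `φ` is an `A`-formula: `A` is the only coalition occurring in it. -/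
def SOnly (A : Set Ag) : SF AP Ag → Prop
  | .atom _ => True
  | .neg φ => SOnly A φ
  | .imp φ ψ => SOnly A φ ∧ SOnly A ψ
  | .coal B ψ => B = A ∧ POnly A ψ
def POnly (A : Set Ag) : PF AP Ag → Prop
  | .of φ => SOnly A φ
  | .neg ψ => POnly A ψ
  | .imp ψ χ => POnly A ψ ∧ POnly A χ
  | .next ψ => POnly A ψ
  | .untl ψ χ => POnly A ψ ∧ POnly A χ
end

/-!
Under the objective semantics a coalition formula is evaluated only along runs from the
current state, so the state `q₁` of `G₅`, unreachable from `q₀`, never matters: `G₆` is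
(up to the epistemic relation) the part of `G₅` reachable from `q₀`, and this embedding
preserves and reflects every formula. A bisimulation `R` with `R q₀ q₀'` must, by the epistemic
back-condition, also relate `q₁` to `q₀'`. The strategy simulator then receives the same
arguments for `q₀` and `q₁`, namely the common neighbourhoods `{q₀, q₁}` and `{q₀'}`, so the
uniform strategy "play `L`" is sent to one strategy of `G₆`, whose successor of `q₀'` would
have to match both the winning successor of `q₀` and the losing successor of `q₁`.
-/

namespace iCGS

variable {Ag AP S S' Act : Type}

lemma Valid.succ_nonempty {G : iCGS Ag AP S Act} (hG : G.Valid) {A : Set Ag} {Q : Set S}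
    {σ : Ag → S → Act} (hσ : G.IsPStrat A Q σ) {q : S} (hq : q ∈ Q) :
    (G.succ A σ q).Nonempty := by
  classical
  choose d hd using hG.2.1
  let a : Ag → Act := fun i => if i ∈ A then σ i q else d i q
  have ha : ∀ i, a i ∈ G.protocol i q := fun i => by
    by_cases hi : i ∈ A
    · simpa [a, hi] using hσ.1 i hi q hq
    · simpa [a, hi] using hd i q
  obtain ⟨t, ht⟩ := (hG.2.2.2 q a).2 ha
  exact ⟨t, a, fun i hi => if_pos hi, ht⟩

/-- The strategy simulator sees only the common-knowledge neighbourhoods, and these coincide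
for two states simulated by the same state. -/
lemma IsSimulation.exists_succ_label_eq {G : iCGS Ag AP S Act} {Act' : Type}
    {G' : iCGS Ag AP S' Act'} {A : Set Ag} {R : S → S' → Prop}
    (hR : G.IsSimulation G' A R) (hG' : G'.Valid) {q₁ q₂ : S} {q' : S'}
    (h₁ : R q₁ q') (h₂ : R q₂ q') {σ : Ag → S → Act} (hσ : G.IsPStrat A (G.CKN A q₁) σ) :
    ∃ s₁ ∈ G.succ A σ q₁, ∃ s₂ ∈ G.succ A σ q₂, G.label s₁ = G.label s₂ := by
  obtain ⟨⟨ST, hST⟩, hlabel, -, hCKN⟩ := hR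
  have hCKN₂ : G.CKN A q₁ = G.CKN A q₂ := hCKN q₁ q₂ q' h₁ h₂
  obtain ⟨s', hs'⟩ := hG'.succ_nonempty ((hST q₁ q' h₁).1 σ hσ) Relation.ReflTransGen.refl
  obtain ⟨s₁, hs₁, hR₁⟩ := (hST q₁ q' h₁).2 q₁ Relation.ReflTransGen.refl q'
    Relation.ReflTransGen.refl h₁ σ hσ s' hs'
  rw [hCKN₂] at hσ hs'
  obtain ⟨s₂, hs₂, hR₂⟩ := (hST q₂ q' h₂).2 q₂ Relation.ReflTransGen.refl q'
    Relation.ReflTransGen.refl h₂ σ hσ s' hs'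
  exact ⟨s₁, hs₁, s₂, hs₂, (hlabel _ _ hR₁).trans (hlabel _ _ hR₂).symm⟩

/-- `emb` identifies `G'` with a transition-closed part of `G`; `retract` is a left inverse
of `emb` that, like `emb`, respects indistinguishability and protocols, so that uniform
strategies can be moved in both directions. -/
structure ObjEmbedding (G : iCGS Ag AP S Act) (G' : iCGS Ag AP S' Act) where
  emb : S' → S
  retract : S → S'
  retract_emb : ∀ s', retract (emb s') = s'
  label_emb : ∀ s', G.label (emb s') = G'.label s'
  trans_emb_iff : ∀ s' a t, G.trans (emb s') a t ↔ ∃ t', t = emb t' ∧ G'.trans s' a t'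
  indist_emb : ∀ i s' t', G'.indist i s' t' → G.indist i (emb s') (emb t')
  indist_retract : ∀ i s t, G.indist i s t → G'.indist i (retract s) (retract t)
  protocol_emb : ∀ i s', G.protocol i (emb s') ⊆ G'.protocol i s'
  protocol_retract : ∀ i s, G'.protocol i (retract s) ⊆ G.protocol i s

namespace ObjEmbedding

variable {G : iCGS Ag AP S Act} {G' : iCGS Ag AP S' Act} (e : G.ObjEmbedding G') {A : Set Ag}

lemma isStrat_comp_emb {σ : Ag → S → Act} (hσ : G.IsStrat A σ) :
    G'.IsStrat A (fun i s' => σ i (e.emb s')) :=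
  ⟨fun i hi s' _ => e.protocol_emb i s' (hσ.1 i hi _ trivial),
    fun i hi s' _ t' _ h => hσ.2 i hi _ trivial _ trivial (e.indist_emb i s' t' h)⟩

lemma isStrat_comp_retract {τ : Ag → S' → Act} (hτ : G'.IsStrat A τ) :
    G.IsStrat A (fun i s => τ i (e.retract s)) :=
  ⟨fun i hi s _ => e.protocol_retract i s (hτ.1 i hi _ trivial),
    fun i hi s _ t _ h => hτ.2 i hi _ trivial _ trivial (e.indist_retract i s t h)⟩

lemma emb_comp_mem_outObj {σ : Ag → S → Act} {s' : S'} {lam' : ℕ → S'}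
    (h : lam' ∈ G'.OutObj A (fun i s' => σ i (e.emb s')) s') :
    (fun n => e.emb (lam' n)) ∈ G.OutObj A σ (e.emb s') := by
  refine ⟨congrArg e.emb h.1, fun j => ?_⟩
  obtain ⟨a, ha, htrans⟩ := h.2 j
  exact ⟨a, ha, (e.trans_emb_iff _ _ _).2 ⟨_, rfl, htrans⟩⟩

lemma exists_eq_emb_comp_of_mem_outObj {τ : Ag → S' → Act} {s' : S'} {lam : ℕ → S}
    (h : lam ∈ G.OutObj A (fun i s => τ i (e.retract s)) (e.emb s')) :
    ∃ lam' ∈ G'.OutObj A τ s', lam = fun n => e.emb (lam' n) := by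
  have step : ∀ j t', lam j = e.emb t' →
      ∃ u', lam (j + 1) = e.emb u' ∧ u' ∈ G'.succ A τ t' := fun j t' hj => by
    obtain ⟨a, ha, htrans⟩ := h.2 j
    rw [hj] at ha htrans
    obtain ⟨u', hu', htrans'⟩ := (e.trans_emb_iff _ _ _).1 htrans
    exact ⟨u', hu', a, fun i hi => (ha i hi).trans (congrArg _ (e.retract_emb t')), htrans'⟩
  have hemb : ∀ j, lam j = e.emb (e.retract (lam j)) := fun j => by
    induction j with
    | zero => rw [h.1, e.retract_emb]
    | succ j ih =>
      obtain ⟨u', hu', -⟩ := step j _ ih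
      rw [hu', e.retract_emb]
  refine ⟨fun n => e.retract (lam n), ⟨?_, fun j => ?_⟩, funext hemb⟩
  · show e.retract (lam 0) = s'
    rw [h.1, e.retract_emb]
  · obtain ⟨u', hu', hsucc⟩ := step j _ (hemb j)
    show e.retract (lam (j + 1)) ∈ G'.succ A τ (e.retract (lam j))
    rwa [hu', e.retract_emb]

mutual

theorem ssat_emb_iff (s' : S') :
    ∀ φ : SF AP Ag, SSat G false (e.emb s') φ ↔ SSat G' false s' φ
  | .atom p => by simp only [SSat, e.label_emb]
  | .neg φ => not_congr (ssat_emb_iff s' φ)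
  | .imp φ ψ => imp_congr (ssat_emb_iff s' φ) (ssat_emb_iff s' ψ)
  | .coal A ψ => by
      simp only [SSat, Out, Bool.false_eq_true, if_false]
      constructor
      · rintro ⟨σ, hσ, hout⟩
        refine ⟨_, e.isStrat_comp_emb hσ, fun lam' hlam' => ?_⟩
        exact (psat_emb_comp_iff lam' ψ).1 (hout _ (e.emb_comp_mem_outObj hlam'))
      · rintro ⟨τ, hτ, hout⟩
        refine ⟨_, e.isStrat_comp_retract hτ, fun lam hlam => ?_⟩
        obtain ⟨lam', hlam', rfl⟩ := e.exists_eq_emb_comp_of_mem_outObj hlam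
        exact (psat_emb_comp_iff lam' ψ).2 (hout lam' hlam')

theorem psat_emb_comp_iff (lam' : ℕ → S') :
    ∀ ψ : PF AP Ag, PSat G false (fun n => e.emb (lam' n)) ψ ↔ PSat G' false lam' ψ
  | .of φ => ssat_emb_iff (lam' 0) φ
  | .neg ψ => not_congr (psat_emb_comp_iff lam' ψ)
  | .imp ψ χ => imp_congr (psat_emb_comp_iff lam' ψ) (psat_emb_comp_iff lam' χ)
  | .next ψ => psat_emb_comp_iff (fun n => lam' (n + 1)) ψ
  | .untl ψ χ => exists_congr fun j =>
      and_congr (psat_emb_comp_iff (fun n => lam' (n + j)) χ)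
        (forall₂_congr fun k _ => psat_emb_comp_iff (fun n => lam' (n + k)) ψ)

end

end ObjEmbedding

def ofStep (init : S) (indist : S → S → Prop) (step : S → Act → S) (label : S → Set AP) :
    iCGS Unit AP S Act where
  init := init
  indist := fun _ => indist
  protocol := fun _ _ => Set.univ
  trans := fun s a t => t = step s (a ())
  label := label

lemma valid_ofStep [Nonempty Act] {init : S} {indist : S → S → Prop} {step : S → Act → S}
    {label : S → Set AP} (hindist : Equivalence indist) :
    (ofStep init indist step label).Valid :=
  ⟨fun _ => hindist, fun _ _ => Set.univ_nonempty, fun _ _ _ _ => rfl,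
    fun _ _ => iff_of_true ⟨_, rfl⟩ fun _ => Set.mem_univ _⟩

end iCGS

namespace HennessyMilnerObjective

inductive Move | L | R
deriving DecidableEq, Inhabited

inductive G5State | q0 | q1 | q2 | q3
deriving DecidableEq

inductive G6State | q0 | q2 | q3
deriving DecidableEq

instance : Fintype Move := Fintype.ofList [.L, .R] (by rintro ⟨⟩ <;> simp)

instance : Fintype G5State := Fintype.ofList [.q0, .q1, .q2, .q3] (by rintro ⟨⟩ <;> simp)

instance : Fintype G6State := Fintype.ofList [.q0, .q2, .q3] (by rintro ⟨⟩ <;> simp)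

open Move

def G5State.toG6 : G5State → G6State
  | .q0 | .q1 => .q0
  | .q2 => .q2
  | .q3 => .q3

def G6State.toG5 : G6State → G5State
  | .q0 => .q0
  | .q2 => .q2
  | .q3 => .q3

def step5 : G5State → Move → G5State
  | .q0, L | .q1, R => .q2
  | .q0, R | .q1, L => .q3
  | .q2, _ => .q2
  | .q3, _ => .q3

def step6 : G6State → Move → G6State
  | .q0, L => .q2
  | .q0, R => .q3
  | .q2, _ => .q2
  | .q3, _ => .q3

/-- The only nontrivial indistinguishability class is `{q0, q1}`. -/
def G5 : iCGS Unit Unit G5State Move :=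
  .ofStep .q0 (fun s t => s.toG6 = t.toG6) step5 fun s => {_w | s = .q2}

def G6 : iCGS Unit Unit G6State Move :=
  .ofStep .q0 Eq step6 fun s => {_w | s = .q2}

lemma valid_G5 : G5.Valid := iCGS.valid_ofStep (Equivalence.comap eq_equivalence _)

lemma valid_G6 : G6.Valid := iCGS.valid_ofStep eq_equivalence

lemma step5_toG5 (s : G6State) (m : Move) : step5 s.toG5 m = (step6 s m).toG5 := by
  cases s <;> cases m <;> rfl

def objEmbedding : G5.ObjEmbedding G6 where
  emb := G6State.toG5
  retract := G5State.toG6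
  retract_emb s := by cases s <;> rfl
  label_emb s := by cases s <;> simp [G5, G6, iCGS.ofStep, G6State.toG5]
  trans_emb_iff _ _ _ := by simp [G5, G6, iCGS.ofStep, step5_toG5]
  indist_emb _ s t h := by cases h; rfl
  indist_retract _ _ _ h := h
  protocol_emb _ _ := subset_rfl
  protocol_retract _ _ := subset_rfl

lemma not_bisimilar_q0 : ¬ ∃ R, G5.IsBisimulation G6 Set.univ R ∧ R .q0 .q0 := by
  rintro ⟨R, ⟨hsim, -, -, hback, -⟩, h₀⟩
  obtain ⟨_, rfl, h₁⟩ := hback .q0 .q0 h₀ () trivial .q1 rfl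
  have hL : G5.IsPStrat Set.univ (G5.CKN Set.univ .q0) fun _ _ => L :=
    ⟨fun _ _ _ _ => trivial, fun _ _ _ _ _ _ _ => rfl⟩
  obtain ⟨_, ⟨a₀, ha₀, rfl⟩, _, ⟨a₁, ha₁, rfl⟩, hlabel⟩ :=
    hsim.exists_succ_label_eq valid_G6 h₀ h₁ hL
  rw [ha₀ () trivial, ha₁ () trivial] at hlabel
  simp [G5, iCGS.ofStep, step5] at hlabel

end HennessyMilnerObjective

/-- failure of the Hennessy–Milner property under the objective
semantics: there are finite single-agent iCGS and states satisfying exactly the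
same `Ag`-formulas of ATL* (objective imperfect-information memoryless
semantics) that are not related by any `Ag`-bisimulation. -/
theorem hennessy_milner_fails_objective :
    ∃ (S₅ S₆ Act₅ Act₆ : Type) (_ : Fintype S₅) (_ : Fintype S₆)
      (_ : Fintype Act₅) (_ : Fintype Act₆)
      (G₅ : iCGS Unit Unit S₅ Act₅) (G₆ : iCGS Unit Unit S₆ Act₆)
      (q₀ : S₅) (q₀' : S₆),
      G₅.Valid ∧ G₆.Valid ∧
      (∀ φ : SF Unit Unit, SOnly Set.univ φ →
        (SSat G₅ false q₀ φ ↔ SSat G₆ false q₀' φ)) ∧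
      ¬ ∃ R, G₅.IsBisimulation G₆ Set.univ R ∧ R q₀ q₀' :=
  open HennessyMilnerObjective in
  ⟨G5State, G6State, Move, Move, inferInstance, inferInstance, inferInstance, inferInstance,
    G5, G6, .q0, .q0, valid_G5, valid_G6, fun φ _ => objEmbedding.ssat_emb_iff .q0 φ,
    not_bisimilar_q0⟩
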